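/- Let A be a unital C*-algebra and let v, t₁, t_j ∈ A (j ≥ 2) satisfy v*v = 1, vv* = p for a projection p, v* t₁ = 1, t₁* t₁ = 1, t_j* t_j = p, t₁ t₁* = e for a projection e ≤ p, and p + ∑_{j=2}^m t_j t_j* ≤ 1 with mutually orthogonal range projections. Define s̃₁ := v* t₁ v, s̃_j := v* t₁ t_j v for j ≥ 2, and f̃ := v* e v. Then s̃_j* s̃_j = 1 for all j, and s̃₁ s̃₁* + ∑_{j=2}^m s̃_j s̃_j* ≤ f̃ for every m ≥ 2. -/

import Mathlib

/-!
Since `v* t₁ = 1` (hence also `t₁* v = 1`), the elements collapse: `s̃₁ = v`, `s̃_j = t_j v` and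
`f̃ = (v* t₁)(t₁* v) = 1`. So `s̃_j* s̃_j = v* p v = (v* v)² = 1`, and the inequality becomes
`p + ∑ t_j p t_j* ≤ 1`. Dropping the positive sum from the hypothesis gives `p ≤ 1`, whence
`t_j p t_j* ≤ t_j t_j*` by conjugation, and the hypothesis finishes the proof.
-/

section StarRing

variable {R : Type*} [Ring R] [StarRing R]

lemma star_mul_self_mul_eq_one {v x : R} (hv : star v * v = 1) (hx : star x * x = v * star v) :
    star (x * v) * (x * v) = 1 := by
  calc star (x * v) * (x * v) = star v * (star x * x) * v := by rw [star_mul]; noncomm_ring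
    _ = (star v * v) * (star v * v) := by rw [hx]; noncomm_ring
    _ = 1 := by rw [hv, one_mul]

lemma mul_mul_star_mul (x v : R) : x * v * star (x * v) = x * (v * star v) * star x := by
  rw [star_mul]; noncomm_ring

end StarRing

section StarOrderedRing

variable {R : Type*} [Ring R] [StarRing R] [PartialOrder R] [StarOrderedRing R]

lemma add_sum_conjugate_le_one {ι : Type*} {s : Finset ι} {p : R} {t : ι → R}
    (h : p + ∑ i ∈ s, t i * star (t i) ≤ 1) : p + ∑ i ∈ s, t i * p * star (t i) ≤ 1 := by
  have hp : p ≤ 1 :=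
    le_of_add_le_of_nonneg_left h (Finset.sum_nonneg fun i _ => mul_star_self_nonneg (t i))
  have hconj : ∀ i ∈ s, t i * p * star (t i) ≤ t i * star (t i) := fun i _ => by
    simpa only [mul_one] using star_right_conjugate_le_conjugate hp (t i)
  exact le_trans (add_le_add_right (Finset.sum_le_sum hconj) p) h

end StarOrderedRing

theorem stmt13_general {A : Type*} [NormedRing A] [StarRing A]
    [PartialOrder A] [StarOrderedRing A]
    (v t₁ p e : A) (t : ℕ → A)
    (h1 : star v * v = 1) (h2 : v * star v = p)
    (h3 : star v * t₁ = 1)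
    (h5 : ∀ j, 2 ≤ j → star (t j) * t j = p)
    (h6 : t₁ * star t₁ = e)
    (h8 : ∀ m, 2 ≤ m → p + ∑ j ∈ Finset.Icc 2 m, t j * star (t j) ≤ 1) :
    (star (star v * t₁ * v) * (star v * t₁ * v) = 1 ∧
      ∀ j, 2 ≤ j → star (star v * t₁ * t j * v) * (star v * t₁ * t j * v) = 1) ∧
    (∀ m, 2 ≤ m →
      (star v * t₁ * v) * star (star v * t₁ * v) +
        ∑ j ∈ Finset.Icc 2 m, (star v * t₁ * t j * v) * star (star v * t₁ * t j * v)
        ≤ star v * e * v) := by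
  have h3' : star t₁ * v = 1 := by simpa using congrArg star h3
  have hf : star v * e * v = 1 := by rw [← h6, ← mul_assoc, h3, one_mul, h3']
  simp only [h3, one_mul, hf, mul_mul_star_mul, h2]
  exact ⟨⟨h1, fun j hj => star_mul_self_mul_eq_one h1 (h2 ▸ h5 j hj)⟩,
    fun m hm => add_sum_conjugate_le_one (h8 m hm)⟩

/-- With `s̃₁ := v* t₁ v`, `s̃_j := v* t₁ t_j v` (`j ≥ 2`) and
`f̃ := v* e v`, all `s̃_j` are isometries and
`s̃₁ s̃₁* + ∑_{j=2}^m s̃_j s̃_j* ≤ f̃` for every `m ≥ 2`. -/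
theorem stmt13 {A : Type*} [NormedRing A] [StarRing A] [CStarRing A] [CompleteSpace A]
    [NormedAlgebra ℂ A] [StarModule ℂ A] [PartialOrder A] [StarOrderedRing A]
    (v t₁ p e : A) (t : ℕ → A)
    (hp₁ : IsSelfAdjoint p) (hp₂ : IsIdempotentElem p)
    (he₁ : IsSelfAdjoint e) (he₂ : IsIdempotentElem e)
    (h1 : star v * v = 1) (h2 : v * star v = p)
    (h3 : star v * t₁ = 1) (h4 : star t₁ * t₁ = 1)
    (h5 : ∀ j, 2 ≤ j → star (t j) * t j = p)
    (h6 : t₁ * star t₁ = e) (h7 : e ≤ p)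
    (h8 : ∀ m, 2 ≤ m → p + ∑ j ∈ Finset.Icc 2 m, t j * star (t j) ≤ 1)
    (h9 : ∀ i j, 2 ≤ i → 2 ≤ j → i ≠ j →
      (t i * star (t i)) * (t j * star (t j)) = 0)
    (h10 : ∀ j, 2 ≤ j → p * (t j * star (t j)) = 0 ∧ (t j * star (t j)) * p = 0) :
    (star (star v * t₁ * v) * (star v * t₁ * v) = 1 ∧
      ∀ j, 2 ≤ j → star (star v * t₁ * t j * v) * (star v * t₁ * t j * v) = 1) ∧
    (∀ m, 2 ≤ m →
      (star v * t₁ * v) * star (star v * t₁ * v) +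
        ∑ j ∈ Finset.Icc 2 m, (star v * t₁ * t j * v) * star (star v * t₁ * t j * v)
        ≤ star v * e * v) :=
  stmt13_general v t₁ p e t h1 h2 h3 h5 h6 h8
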